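/- arXiv:1402.4178 — 4 statements merged into one kernel-verified Lean document; each statement's English description precedes it below -/
import Mathlib

section
/- Let a_1,…,a_m be positive integers with a_1 + ⋯ + a_m = 2B. Consider stockpiles on a pad of length 6B with travel speed s = 5B: two stockpiles of length 2B at [0,2B] and [4B,6B], and stockpiles of lengths a_1,…,a_m placed contiguously on [2B, 4B]. Then these stockpiles can be partitioned into two sets with total length 3B each if and only if there exists an index set I ⊆ {1,…,m} with Σ_{i∈I} a_i = B. -/
open Finset

lemma Finset.sum_sumElim_const {ι κ M : Type*} [AddCommMonoid M] (f : ι → M) (c : M)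
    (S : Finset (ι ⊕ κ)) :
    ∑ i ∈ S, Sum.elim f (fun _ => c) i = ∑ i ∈ S.toLeft, f i + #S.toRight • c := by
  conv_lhs => rw [← toLeft_disjSum_toRight (u := S)]
  simp only [sum_disjSum, Sum.elim_inl, Sum.elim_inr, sum_const]

/-- A side of total length `3B` cannot hold both stockpiles of length `2B` (that is `4B`) nor
neither of them (the small ones only reach `2B`), so it holds one and small ones of length `B`. -/
lemma sum_toLeft_eq_of_sum_sumElim_eq {m B : ℕ} {a : Fin m → ℕ} (hsum : ∑ i, a i = 2 * B)
    {S : Finset (Fin m ⊕ Fin 2)} (hS : ∑ i ∈ S, Sum.elim a (fun _ => 2 * B) i = 3 * B) :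
    ∑ i ∈ S.toLeft, a i = B := by
  rw [sum_sumElim_const, smul_eq_mul] at hS
  have hsmall : ∑ i ∈ S.toLeft, a i ≤ 2 * B := hsum ▸ sum_le_univ_sum_of_nonneg (by simp)
  have hcard : #S.toRight ≤ 2 := by simpa using card_le_univ S.toRight
  interval_cases #S.toRight <;> omega

theorem stmt1_general (m B : ℕ) (a : Fin m → ℕ)
    (hsum : ∑ i, a i = 2 * B) :
    (∃ S : Finset (Fin m ⊕ Fin 2),
        ∑ i ∈ S, Sum.elim a (fun _ => 2 * B) i = 3 * B ∧
        ∑ i ∈ Sᶜ, Sum.elim a (fun _ => 2 * B) i = 3 * B) ↔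
    (∃ I : Finset (Fin m), ∑ i ∈ I, a i = B) := by
  constructor
  · rintro ⟨S, hS, -⟩
    exact ⟨S.toLeft, sum_toLeft_eq_of_sum_sumElim_eq hsum hS⟩
  · rintro ⟨I, hI⟩
    set S : Finset (Fin m ⊕ Fin 2) := I.disjSum {0}
    have hside : ∑ i ∈ S, Sum.elim a (fun _ => 2 * B) i = 3 * B := by
      rw [sum_sumElim_const, toLeft_disjSum, toRight_disjSum, hI, card_singleton, one_smul]
      ring
    have htotal : ∑ i : Fin m ⊕ Fin 2, Sum.elim a (fun _ => 2 * B) i = 6 * B := by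
      rw [Fintype.sum_sum_type]
      simp only [Sum.elim_inl, Sum.elim_inr, hsum, sum_const, card_univ, Fintype.card_fin,
        smul_eq_mul]
      ring
    have hsplit := sum_add_sum_compl S (Sum.elim a (fun _ => 2 * B))
    exact ⟨S, hside, by omega⟩

/-- Partition-reduction instance: stockpiles are the `m` small stockpiles of lengths
`a i` together with two stockpiles of length `2B`.  They can be split into two sets
each of total length `3B` iff the Partition instance is a YES-instance. -/
theorem stmt1 (m B : ℕ) (hB : 0 < B) (a : Fin m → ℕ) (ha : ∀ i, 0 < a i)
    (hsum : ∑ i, a i = 2 * B) :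
    (∃ S : Finset (Fin m ⊕ Fin 2),
        ∑ i ∈ S, Sum.elim a (fun _ => 2 * B) i = 3 * B ∧
        ∑ i ∈ Sᶜ, Sum.elim a (fun _ => 2 * B) i = 3 * B) ↔
    (∃ I : Finset (Fin m), ∑ i ∈ I, a i = B) :=
  stmt1_general m B a hsum
end

section
/- Let E = [a_1,b_1] ∪ ⋯ ∪ [a_r,b_r] be a finite union of pairwise disjoint closed intervals in [0,L], and let f, g : [0,L] → ℝ satisfy f + g = 2K₀, f strictly increasing, g strictly decreasing, with unique x* satisfying f(x*) = g(x*) = K₀. Define K_i = max{f(a_i), g(b_i)} for i = 1,…,r and K* = min{K₀, K_1, …, K_r}. If x* ∉ E then K* = K₀, and if x* ∈ [a_i, b_i] for some i then K* = K_i. -/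
/-! An interval `[a_i, b_i]` missing `x*` lies on one side of it, so by monotonicity
`K_i ≥ f(x*) = g(x*) = K₀`; an interval containing `x*` has `K_i ≤ K₀`. By disjointness at most
one interval contains `x*`, so the minimum is attained at `K₀` or at that interval. -/

open Set

theorem Finset.inf'_univ_eq_of_forall_le {ι α : Type*} [Fintype ι] [SemilatticeInf α]
    (H : (Finset.univ : Finset ι).Nonempty) (F : ι → α) (o : ι) (h : ∀ o', F o ≤ F o') :
    Finset.univ.inf' H F = F o :=
  le_antisymm (Finset.inf'_le _ (Finset.mem_univ o)) (Finset.le_inf' _ _ fun o' _ => h o')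

section MonotoneAntitone

variable {α β : Type*} [LinearOrder α] [LinearOrder β] {s : Set α} {f g : α → β} {x a b : α}

theorem min_le_max_of_notMem_Icc (hf : MonotoneOn f s) (hg : AntitoneOn g s)
    (hx : x ∈ s) (ha : a ∈ s) (hb : b ∈ s) (h : x ∉ Icc a b) :
    min (f x) (g x) ≤ max (f a) (g b) := by
  rcases not_and_or.1 h with hxa | hbx
  · exact (min_le_left _ _).trans <| (hf hx ha (not_le.1 hxa).le).trans (le_max_left _ _)
  · exact (min_le_right _ _).trans <| (hg hb hx (not_le.1 hbx).le).trans (le_max_right _ _)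

theorem max_le_max_of_mem_Icc (hf : MonotoneOn f s) (hg : AntitoneOn g s)
    (hx : x ∈ s) (ha : a ∈ s) (hb : b ∈ s) (h : x ∈ Icc a b) :
    max (f a) (g b) ≤ max (f x) (g x) :=
  max_le_max (hf ha hx h.1) (hg hx hb h.2)

end MonotoneAntitone

theorem stmt3_general (L K₀ : ℝ) (r : ℕ) (a b : Fin r → ℝ)
    (hab : ∀ i, 0 ≤ a i ∧ a i ≤ b i ∧ b i ≤ L)
    (hdisj : ∀ i j, i ≠ j → Disjoint (Set.Icc (a i) (b i)) (Set.Icc (a j) (b j)))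
    (f g : ℝ → ℝ)
    (hfm : StrictMonoOn f (Set.Icc 0 L)) (hga : StrictAntiOn g (Set.Icc 0 L))
    (xstar : ℝ) (hx : xstar ∈ Set.Icc 0 L)
    (hfx : f xstar = K₀) (hgx : g xstar = K₀)
    (Kstar : ℝ)
    (hKstar : Kstar = Finset.univ.inf'
      (Finset.univ_nonempty (α := Option (Fin r)))
      (fun o => Option.elim o K₀ (fun i => max (f (a i)) (g (b i))))) :
    (xstar ∉ ⋃ i, Set.Icc (a i) (b i) → Kstar = K₀) ∧
    (∀ i, xstar ∈ Set.Icc (a i) (b i) → Kstar = max (f (a i)) (g (b i))) := by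
  have ha i : a i ∈ Icc 0 L := ⟨(hab i).1, (hab i).2.1.trans (hab i).2.2⟩
  have hb i : b i ∈ Icc 0 L := ⟨(hab i).1.trans (hab i).2.1, (hab i).2.2⟩
  have hout i (h : xstar ∉ Icc (a i) (b i)) : K₀ ≤ max (f (a i)) (g (b i)) := by
    simpa [hfx, hgx] using
      min_le_max_of_notMem_Icc hfm.monotoneOn hga.antitoneOn hx (ha i) (hb i) h
  have hin i (h : xstar ∈ Icc (a i) (b i)) : max (f (a i)) (g (b i)) ≤ K₀ := by
    simpa [hfx, hgx] using
      max_le_max_of_mem_Icc hfm.monotoneOn hga.antitoneOn hx (ha i) (hb i) h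
  subst hKstar
  refine ⟨fun hnot => Finset.inf'_univ_eq_of_forall_le _ _ none ?_,
    fun i hi => Finset.inf'_univ_eq_of_forall_le _ _ (some i) ?_⟩
  · rintro (_ | j)
    · exact le_rfl
    · exact hout j fun hj => hnot (mem_iUnion_of_mem j hj)
  · rintro (_ | j)
    · exact hin i hi
    · by_cases hij : i = j
      · subst hij; exact le_rfl
      · exact (hin i hi).trans (hout j fun hj => disjoint_left.1 (hdisj i j hij) hi hj)

/-- Identification of the optimal preemptive makespan `K*` among `K₀, K_1, …, K_r`. -/
theorem stmt3 (L K₀ : ℝ) (hL : 0 ≤ L) (r : ℕ) (a b : Fin r → ℝ)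
    (hab : ∀ i, 0 ≤ a i ∧ a i ≤ b i ∧ b i ≤ L)
    (hdisj : ∀ i j, i ≠ j → Disjoint (Set.Icc (a i) (b i)) (Set.Icc (a j) (b j)))
    (f g : ℝ → ℝ)
    (hsum : ∀ x ∈ Set.Icc 0 L, f x + g x = 2 * K₀)
    (hfm : StrictMonoOn f (Set.Icc 0 L)) (hga : StrictAntiOn g (Set.Icc 0 L))
    (xstar : ℝ) (hx : xstar ∈ Set.Icc 0 L)
    (hfx : f xstar = K₀) (hgx : g xstar = K₀)
    (huniq : ∀ y ∈ Set.Icc 0 L, f y = K₀ → g y = K₀ → y = xstar)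
    (Kstar : ℝ)
    (hKstar : Kstar = Finset.univ.inf'
      (Finset.univ_nonempty (α := Option (Fin r)))
      (fun o => Option.elim o K₀ (fun i => max (f (a i)) (g (b i))))) :
    (xstar ∉ ⋃ i, Set.Icc (a i) (b i) → Kstar = K₀) ∧
    (∀ i, xstar ∈ Set.Icc (a i) (b i) → Kstar = max (f (a i)) (g (b i))) :=
  stmt3_general L K₀ r a b hab hdisj f g hfm hga xstar hx hfx hgx Kstar hKstar
end

section
/- For a single reclaimer with positioning decisions and a fixed reclaim order, assuming p_1 + ⋯ + p_n ≤ 3L/2, for any placement of the stockpiles on two pads of length L and any feasible schedule of one reclaimer starting and ending at 0, the makespan C satisfies C ≥ P + min_{0 ≤ k ≤ n} |P^k − P̄^k| / s, where P = Σ p_i, P^k = Σ_{i≤k} p_i, P̄^k = P − P^k. -/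
/-!
Let `t₁` be a time at which the reclaimer reaches its rightmost position `x₁`. Every stockpile
lies in `[0, x₁]`; the stockpiles finished by `t₁` form an initial segment `i < k` of the reclaim
order, and all others start after `t₁`. On `[0, t₁]`, and time-reversed on `[t₁, C]`, the
reclaimer sweeps from `0` to `x₁`. A point of `(0, x₁)` covered by none or by two of the
stockpiles reclaimed in that half must be passed over while the reclaimer travels idle (the sweep
crosses it an odd number of times, those reclaims an even number), and idle travel covers at most
`s` times its duration. With `Q` the reclaimed length and `A` the measure of the overlap of the
two pads, this gives `x₁ - Q + 2A ≤ s · (idle time)` and `Q ≤ x₁ + A`; adding the two halves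
yields `|P^k - P̄^k| ≤ s (C - P)`.
-/

open MeasureTheory Set Finset

/-- `H` traverses the interval `[a,b]` at speed 1 starting at time `t₁`,
either left-to-right or right-to-left. -/
def Traverses (H : ℝ → ℝ) (t₁ a b : ℝ) : Prop :=
  (∀ u ∈ Set.Icc t₁ (t₁ + (b - a)), H u = a + (u - t₁)) ∨
  (∀ u ∈ Set.Icc t₁ (t₁ + (b - a)), H u = b - (u - t₁))

namespace Traverses

variable {H : ℝ → ℝ} {t a d : ℝ}

lemma apply_mem_Ioo (h : Traverses H t a (a + d)) {u : ℝ} (hu : u ∈ Ioo t (t + d)) :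
    H u ∈ Ioo a (a + d) := by
  rw [Traverses, add_sub_cancel_left] at h
  obtain ⟨hu₁, hu₂⟩ := hu
  rcases h with h | h <;> rw [h u ⟨hu₁.le, hu₂.le⟩] <;> constructor <;> linarith

lemma apply_left_right (h : Traverses H t a (a + d)) (hd : 0 ≤ d) :
    H t = a ∧ H (t + d) = a + d ∨ H t = a + d ∧ H (t + d) = a := by
  rw [Traverses, add_sub_cancel_left] at h
  have h₀ : t ∈ Icc t (t + d) := left_mem_Icc.2 (by linarith)
  have h₁ : t + d ∈ Icc t (t + d) := right_mem_Icc.2 (by linarith)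
  rcases h with h | h
  · exact Or.inl ⟨by rw [h t h₀]; ring, by rw [h _ h₁]; ring⟩
  · exact Or.inr ⟨by rw [h t h₀]; ring, by rw [h _ h₁]; ring⟩

lemma comp_neg (h : Traverses H t a (a + d)) :
    Traverses (fun u => H (-u)) (-(t + d)) a (a + d) := by
  rw [Traverses, add_sub_cancel_left] at h ⊢
  rcases h with h | h
  · refine Or.inr fun u hu => ?_
    rw [h (-u) ⟨by linarith [hu.2], by linarith [hu.1]⟩]; ring
  · refine Or.inl fun u hu => ?_
    rw [h (-u) ⟨by linarith [hu.2], by linarith [hu.1]⟩]; ring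

lemma add_le_of_isMaxOn {s : Set ℝ} {t₁ : ℝ} (h : Traverses H t a (a + d)) (hd : 0 ≤ d)
    (hs : Icc t (t + d) ⊆ s) (hmax : IsMaxOn H s t₁) : a + d ≤ H t₁ := by
  rcases h.apply_left_right hd with ⟨-, he⟩ | ⟨he, -⟩
  · exact he ▸ hmax (hs (right_mem_Icc.2 (by linarith)))
  · exact he ▸ hmax (hs (left_mem_Icc.2 (by linarith)))

lemma notMem_Ioo_of_isMaxOn {s : Set ℝ} {t₁ : ℝ} (h : Traverses H t a (a + d))
    (hs : Icc t (t + d) ⊆ s) (hmax : IsMaxOn H s t₁) : t₁ ∉ Ioo t (t + d) := fun ht₁ =>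
  (h.apply_mem_Ioo ht₁).2.not_ge (h.add_le_of_isMaxOn (by linarith [ht₁.1, ht₁.2]) hs hmax)

end Traverses

lemma Fin.exists_iff_lt_of_antitone {n : ℕ} {P : Fin n → Prop} (hP : Antitone P) :
    ∃ k ≤ n, ∀ i : Fin n, P i ↔ (i : ℕ) < k := by
  by_cases h : ∀ i, P i
  · exact ⟨n, le_rfl, fun i => iff_of_true (h i) i.isLt⟩
  obtain ⟨i₀, hi₀, hmin⟩ := WellFounded.has_min wellFounded_lt {i | ¬ P i} (not_forall.1 h)
  refine ⟨i₀, i₀.isLt.le, fun i => ⟨fun hi => ?_, fun hi => ?_⟩⟩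
  · by_contra hle
    exact hi₀ (hP (Fin.le_def.2 (not_lt.1 hle)) hi)
  · by_contra hPi
    exact hmin i hPi hi

lemma LipschitzWith.volume_image_le {K : NNReal} {f : ℝ → ℝ} (hf : LipschitzWith K f)
    (s : Set ℝ) : volume (f '' s) ≤ K * volume s := by
  simpa [hausdorffMeasure_real] using hf.hausdorffMeasure_image_le zero_le_one s

lemma LipschitzWith.volume_real_image_le {K : NNReal} {f : ℝ → ℝ} (hf : LipschitzWith K f)
    {s : Set ℝ} (hs : volume s ≠ ⊤) : volume.real (f '' s) ≤ K * volume.real s := by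
  simpa [Measure.real, ENNReal.toReal_mul] using
    ENNReal.toReal_mono (ENNReal.mul_ne_top ENNReal.coe_ne_top hs) (hf.volume_image_le s)

section Reclaiming

variable {ι : Type*} (S : Finset ι) (pad : ι → Bool) (lo len ts : ι → ℝ)

def padCover (b : Bool) : Set ℝ :=
  ⋃ i ∈ S.filter (pad · = b), Ioo (lo i) (lo i + len i)

def idleTimes (T₀ T₁ : ℝ) : Set ℝ :=
  Icc T₀ T₁ \ ⋃ i ∈ S, Ioo (ts i) (ts i + len i)

variable {S pad lo len ts}

lemma pairwiseDisjoint_Ioo_of_add_le_or_add_le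
    (h : ∀ i ∈ S, ∀ j ∈ S, i ≠ j → lo i + len i ≤ lo j ∨ lo j + len j ≤ lo i) :
    (S : Set ι).PairwiseDisjoint fun i => Ioo (lo i) (lo i + len i) := by
  intro i hi j hj hij
  refine Set.disjoint_left.2 fun y hyi hyj => ?_
  rcases h i hi j hj hij with h | h
  · linarith [hyi.2, hyj.1]
  · linarith [hyi.1, hyj.2]

lemma mem_padCover {i : ι} (hi : i ∈ S) {y : ℝ} (hy : y ∈ Ioo (lo i) (lo i + len i)) :
    y ∈ padCover S pad lo len (pad i) :=
  mem_biUnion (mem_filter.2 ⟨hi, rfl⟩) hy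

lemma measurableSet_padCover (b : Bool) : MeasurableSet (padCover S pad lo len b) :=
  Finset.measurableSet_biUnion _ fun _ _ => measurableSet_Ioo

lemma volume_padCover_ne_top (b : Bool) : volume (padCover S pad lo len b) ≠ ⊤ :=
  ((measure_biUnion_finset_le _ _).trans_lt
    (ENNReal.sum_lt_top.2 fun _ _ => measure_Ioo_lt_top)).ne

lemma volume_real_padCover (hlen : ∀ i ∈ S, 0 ≤ len i)
    (hspace : ∀ i ∈ S, ∀ j ∈ S, i ≠ j → pad i = pad j →
      lo i + len i ≤ lo j ∨ lo j + len j ≤ lo i) (b : Bool) :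
    volume.real (padCover S pad lo len b) = ∑ i ∈ S with pad i = b, len i := by
  have hdisj := pairwiseDisjoint_Ioo_of_add_le_or_add_le (S := S.filter (pad · = b))
    (lo := lo) (len := len) fun i hi j hj hij => by
      simp only [mem_filter] at hi hj
      exact hspace i hi.1 j hj.1 hij (hi.2.trans hj.2.symm)
  rw [padCover, measureReal_biUnion_finset hdisj (fun _ _ => measurableSet_Ioo)
    fun _ _ => measure_Ioo_lt_top.ne]
  exact sum_congr rfl fun i hi => by
    rw [Real.volume_real_Ioo_of_le (by linarith [hlen i (mem_filter.1 hi).1])]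
    ring

lemma volume_real_padCover_union_add_inter (hlen : ∀ i ∈ S, 0 ≤ len i)
    (hspace : ∀ i ∈ S, ∀ j ∈ S, i ≠ j → pad i = pad j →
      lo i + len i ≤ lo j ∨ lo j + len j ≤ lo i) :
    volume.real (padCover S pad lo len true ∪ padCover S pad lo len false) +
      volume.real (padCover S pad lo len true ∩ padCover S pad lo len false) =
      ∑ i ∈ S, len i := by
  rw [measureReal_union_add_inter (measurableSet_padCover false)
      (volume_padCover_ne_top true) (volume_padCover_ne_top false),
    volume_real_padCover hlen hspace, volume_real_padCover hlen hspace,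
    ← sum_filter_add_sum_filter_not S (pad · = true)]
  simp only [Bool.not_eq_true]

lemma volume_real_idleTimes {T₀ T₁ : ℝ} (hT : T₀ ≤ T₁) (hlen : ∀ i ∈ S, 0 ≤ len i)
    (hts : ∀ i ∈ S, T₀ ≤ ts i ∧ ts i + len i ≤ T₁)
    (htime : ∀ i ∈ S, ∀ j ∈ S, i ≠ j → ts i + len i ≤ ts j ∨ ts j + len j ≤ ts i) :
    volume.real (idleTimes S len ts T₀ T₁) = T₁ - T₀ - ∑ i ∈ S, len i := by
  have hsub : ⋃ i ∈ S, Ioo (ts i) (ts i + len i) ⊆ Icc T₀ T₁ := iUnion₂_subset fun i hi =>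
    Ioo_subset_Icc_self.trans (Icc_subset_Icc (hts i hi).1 (hts i hi).2)
  rw [idleTimes,
    measureReal_sdiff hsub (Finset.measurableSet_biUnion _ fun _ _ => measurableSet_Ioo)
      measure_Icc_lt_top.ne, Real.volume_real_Icc_of_le hT,
    measureReal_biUnion_finset (pairwiseDisjoint_Ioo_of_add_le_or_add_le htime)
      (fun _ _ => measurableSet_Ioo) fun _ _ => measure_Ioo_lt_top.ne]
  congr 1
  exact sum_congr rfl fun i hi => by
    rw [Real.volume_real_Ioo_of_le (by linarith [hlen i hi])]
    ring

variable {H : ℝ → ℝ} {T₀ T₁ B : ℝ}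

lemma mem_image_idleTimes (htrav : ∀ i ∈ S, Traverses H (ts i) (lo i) (lo i + len i))
    {u : ℝ} (hu : u ∈ Icc T₀ T₁)
    (hout : ∀ i ∈ S, H u ∈ Ioo (lo i) (lo i + len i) → u ∉ Ioo (ts i) (ts i + len i)) :
    H u ∈ H '' idleTimes S len ts T₀ T₁ := by
  refine ⟨u, ⟨hu, ?_⟩, rfl⟩
  simp only [mem_iUnion₂, not_exists]
  exact fun i hi hui => hout i hi ((htrav i hi).apply_mem_Ioo hui) hui

lemma eq_of_mem_Ioo_of_pad_eq
    (hspace : ∀ i ∈ S, ∀ j ∈ S, i ≠ j → pad i = pad j →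
      lo i + len i ≤ lo j ∨ lo j + len j ≤ lo i)
    {i j : ι} (hi : i ∈ S) (hj : j ∈ S) (hpad : pad i = pad j) {y : ℝ}
    (hyi : y ∈ Ioo (lo i) (lo i + len i)) (hyj : y ∈ Ioo (lo j) (lo j + len j)) : i = j := by
  by_contra hij
  rcases hspace i hi j hj hij hpad with h | h
  · linarith [hyi.2, hyj.1]
  · linarith [hyi.1, hyj.2]

lemma mem_image_idleTimes_of_notMem_padCover (hH : Continuous H) (hT : T₀ ≤ T₁)
    (h₀ : H T₀ = 0) (h₁ : H T₁ = B)
    (htrav : ∀ i ∈ S, Traverses H (ts i) (lo i) (lo i + len i)) {y : ℝ}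
    (hy : y ∈ Ioo 0 B \ (padCover S pad lo len true ∪ padCover S pad lo len false)) :
    y ∈ H '' idleTimes S len ts T₀ T₁ := by
  obtain ⟨u, hu, rfl⟩ := intermediate_value_Icc hT hH.continuousOn
    (by rw [h₀, h₁]; exact Ioo_subset_Icc_self hy.1)
  refine mem_image_idleTimes htrav hu fun i hi hyi _ => hy.2 ?_
  have hcov := mem_padCover (pad := pad) hi hyi
  generalize pad i = b at hcov
  cases b
  exacts [Or.inr hcov, Or.inl hcov]

lemma exists_crossing_outside (hH : Continuous H) (h₀ : H T₀ = 0) (h₁ : H T₁ = B)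
    {tᵢ tⱼ aᵢ aⱼ dᵢ dⱼ y : ℝ} (hᵢ : Traverses H tᵢ aᵢ (aᵢ + dᵢ))
    (hⱼ : Traverses H tⱼ aⱼ (aⱼ + dⱼ)) (htᵢ : T₀ ≤ tᵢ) (hij : tᵢ + dᵢ ≤ tⱼ)
    (htⱼ : tⱼ + dⱼ ≤ T₁) (haᵢ : 0 ≤ aᵢ) (haⱼ : aⱼ + dⱼ ≤ B)
    (hyᵢ : y ∈ Ioo aᵢ (aᵢ + dᵢ)) (hyⱼ : y ∈ Ioo aⱼ (aⱼ + dⱼ)) :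
    ∃ u ∈ Icc T₀ T₁, H u = y ∧ u ∉ Ioo tᵢ (tᵢ + dᵢ) ∧ u ∉ Ioo tⱼ (tⱼ + dⱼ) := by
  -- `H` crosses `y` before the first reclaim if that one runs downwards; otherwise between the
  -- reclaims if the second runs upwards, and after the second if it runs downwards.
  obtain ⟨hyᵢ₁, hyᵢ₂⟩ := hyᵢ
  obtain ⟨hyⱼ₁, hyⱼ₂⟩ := hyⱼ
  rcases hᵢ.apply_left_right (by linarith) with ⟨-, hᵢ⟩ | ⟨hᵢ, -⟩
  · rcases hⱼ.apply_left_right (by linarith) with ⟨hⱼ, -⟩ | ⟨-, hⱼ⟩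
    · obtain ⟨u, hu, rfl⟩ := intermediate_value_Icc' hij hH.continuousOn
        (show y ∈ Set.Icc _ _ from ⟨by linarith, by linarith⟩)
      exact ⟨u, ⟨by linarith [hu.1], by linarith [hu.2]⟩, rfl,
        fun h => by linarith [h.2, hu.1], fun h => by linarith [h.1, hu.2]⟩
    · obtain ⟨u, hu, rfl⟩ := intermediate_value_Icc (by linarith : tⱼ + dⱼ ≤ T₁)
        hH.continuousOn (show y ∈ Set.Icc _ _ from ⟨by linarith, by linarith⟩)
      exact ⟨u, ⟨by linarith [hu.1], hu.2⟩, rfl,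
        fun h => by linarith [h.2, hu.1], fun h => by linarith [h.2, hu.1]⟩
  · obtain ⟨u, hu, rfl⟩ := intermediate_value_Icc htᵢ hH.continuousOn
      (show y ∈ Set.Icc _ _ from ⟨by linarith, by linarith⟩)
    exact ⟨u, ⟨hu.1, by linarith [hu.2]⟩, rfl,
      fun h => by linarith [h.1, hu.2], fun h => by linarith [h.1, hu.2]⟩

lemma mem_image_idleTimes_of_mem_inter (hH : Continuous H) (h₀ : H T₀ = 0) (h₁ : H T₁ = B)
    (hlo : ∀ i ∈ S, 0 ≤ lo i ∧ lo i + len i ≤ B)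
    (hts : ∀ i ∈ S, T₀ ≤ ts i ∧ ts i + len i ≤ T₁)
    (htime : ∀ i ∈ S, ∀ j ∈ S, i ≠ j → ts i + len i ≤ ts j ∨ ts j + len j ≤ ts i)
    (hspace : ∀ i ∈ S, ∀ j ∈ S, i ≠ j → pad i = pad j →
      lo i + len i ≤ lo j ∨ lo j + len j ≤ lo i)
    (htrav : ∀ i ∈ S, Traverses H (ts i) (lo i) (lo i + len i)) {y : ℝ}
    (hy : y ∈ padCover S pad lo len true ∩ padCover S pad lo len false) :
    y ∈ H '' idleTimes S len ts T₀ T₁ := by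
  suffices key : ∀ i ∈ S, ∀ j ∈ S, pad i ≠ pad j → y ∈ Ioo (lo i) (lo i + len i) →
      y ∈ Ioo (lo j) (lo j + len j) → ts i + len i ≤ ts j → y ∈ H '' idleTimes S len ts T₀ T₁ by
    simp only [padCover, mem_inter_iff, mem_iUnion₂, mem_filter, exists_prop] at hy
    obtain ⟨⟨i, ⟨hi, hpi⟩, hyi⟩, ⟨j, ⟨hj, hpj⟩, hyj⟩⟩ := hy
    have hpad : pad i ≠ pad j := by rw [hpi, hpj]; decide
    rcases htime i hi j hj (ne_of_apply_ne pad hpad) with h | h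
    exacts [key i hi j hj hpad hyi hyj h, key j hj i hi hpad.symm hyj hyi h]
  intro i hi j hj hpad hyi hyj hij
  obtain ⟨u, hu, rfl, hui, huj⟩ := exists_crossing_outside hH h₀ h₁ (htrav i hi) (htrav j hj)
    (hts i hi).1 hij (hts j hj).2 (hlo i hi).1 (hlo j hj).2 hyi hyj
  refine mem_image_idleTimes htrav hu fun k hk hyk => ?_
  have hk' : pad k = pad i ∨ pad k = pad j := by
    revert hpad; cases pad i <;> cases pad j <;> cases pad k <;> decide
  rcases hk' with hki | hkj
  · rwa [eq_of_mem_Ioo_of_pad_eq hspace hk hi hki hyk hyi]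
  · rwa [eq_of_mem_Ioo_of_pad_eq hspace hk hj hkj hyk hyj]

theorem exists_overlap_bounds {K : NNReal} (hH : LipschitzWith K H) (hT : T₀ ≤ T₁) (hB : 0 ≤ B)
    (h₀ : H T₀ = 0) (h₁ : H T₁ = B) (hlen : ∀ i ∈ S, 0 ≤ len i)
    (hlo : ∀ i ∈ S, 0 ≤ lo i ∧ lo i + len i ≤ B)
    (hts : ∀ i ∈ S, T₀ ≤ ts i ∧ ts i + len i ≤ T₁)
    (htime : ∀ i ∈ S, ∀ j ∈ S, i ≠ j → ts i + len i ≤ ts j ∨ ts j + len j ≤ ts i)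
    (hspace : ∀ i ∈ S, ∀ j ∈ S, i ≠ j → pad i = pad j →
      lo i + len i ≤ lo j ∨ lo j + len j ≤ lo i)
    (htrav : ∀ i ∈ S, Traverses H (ts i) (lo i) (lo i + len i)) :
    ∃ A, 0 ≤ A ∧ ∑ i ∈ S, len i ≤ B + A ∧
      B - ∑ i ∈ S, len i + 2 * A ≤ K * (T₁ - T₀ - ∑ i ∈ S, len i) := by
  set U := padCover S pad lo len
  have hU : U true ∪ U false ⊆ Ioo 0 B := by
    refine union_subset ?_ ?_ <;> refine iUnion₂_subset fun i hi => ?_ <;>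
      exact Ioo_subset_Ioo (hlo i (mem_filter.1 hi).1).1 (hlo i (mem_filter.1 hi).1).2
  have hUm : MeasurableSet (U true ∪ U false) :=
    (measurableSet_padCover true).union (measurableSet_padCover false)
  have hIm : MeasurableSet (U true ∩ U false) :=
    (measurableSet_padCover true).inter (measurableSet_padCover false)
  have hIfin : volume (U true ∩ U false) ≠ ⊤ :=
    measure_ne_top_of_subset inter_subset_left (volume_padCover_ne_top true)
  have hidle : volume (idleTimes S len ts T₀ T₁) ≠ ⊤ :=
    measure_ne_top_of_subset sdiff_subset measure_Icc_lt_top.ne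
  set G := (Ioo 0 B \ (U true ∪ U false)) ∪ (U true ∩ U false)
  have hG : volume.real G =
      B - volume.real (U true ∪ U false) + volume.real (U true ∩ U false) := by
    rw [measureReal_union
        (disjoint_sdiff_left.mono_right (inter_subset_left.trans subset_union_left)) hIm
        (measure_ne_top_of_subset sdiff_subset measure_Ioo_lt_top.ne) hIfin,
      measureReal_sdiff hU hUm measure_Ioo_lt_top.ne, Real.volume_real_Ioo_of_le hB, sub_zero]
  have hGsub : G ⊆ H '' idleTimes S len ts T₀ T₁ := union_subset
    (fun _ hy => mem_image_idleTimes_of_notMem_padCover hH.continuous hT h₀ h₁ htrav hy)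
    (fun _ hy => mem_image_idleTimes_of_mem_inter hH.continuous h₀ h₁ hlo hts htime hspace
      htrav hy)
  have hGle : volume.real G ≤ K * (T₁ - T₀ - ∑ i ∈ S, len i) := by
    rw [← volume_real_idleTimes hT hlen hts htime]
    exact (measureReal_mono hGsub (ne_top_of_le_ne_top
      (ENNReal.mul_ne_top ENNReal.coe_ne_top hidle) (hH.volume_image_le _))).trans
      (hH.volume_real_image_le hidle)
  have hUB : volume.real (U true ∪ U false) ≤ B :=
    (measureReal_mono hU measure_Ioo_lt_top.ne).trans_eq
      (Real.volume_real_Ioo_of_le hB ▸ sub_zero B)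
  have hsum := volume_real_padCover_union_add_inter hlen hspace
  exact ⟨_, measureReal_nonneg, by linarith, by linarith⟩

theorem exists_overlap_bounds_rev {K : NNReal} (hH : LipschitzWith K H) (hT : T₀ ≤ T₁)
    (hB : 0 ≤ B) (h₀ : H T₀ = B) (h₁ : H T₁ = 0) (hlen : ∀ i ∈ S, 0 ≤ len i)
    (hlo : ∀ i ∈ S, 0 ≤ lo i ∧ lo i + len i ≤ B)
    (hts : ∀ i ∈ S, T₀ ≤ ts i ∧ ts i + len i ≤ T₁)
    (htime : ∀ i ∈ S, ∀ j ∈ S, i ≠ j → ts i + len i ≤ ts j ∨ ts j + len j ≤ ts i)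
    (hspace : ∀ i ∈ S, ∀ j ∈ S, i ≠ j → pad i = pad j →
      lo i + len i ≤ lo j ∨ lo j + len j ≤ lo i)
    (htrav : ∀ i ∈ S, Traverses H (ts i) (lo i) (lo i + len i)) :
    ∃ A, 0 ≤ A ∧ ∑ i ∈ S, len i ≤ B + A ∧
      B - ∑ i ∈ S, len i + 2 * A ≤ K * (T₁ - T₀ - ∑ i ∈ S, len i) := by
  have h := exists_overlap_bounds (pad := pad) (T₀ := -T₁) (T₁ := -T₀)
    (ts := fun i => -(ts i + len i))
    (by simpa [Function.comp_def] using hH.comp isometry_neg.lipschitz)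
    (neg_le_neg hT) hB (by simpa using h₁) (by simpa using h₀) hlen hlo
    (fun i hi => ⟨by linarith [(hts i hi).2], by linarith [(hts i hi).1]⟩)
    (fun i hi j hj hij => (htime i hi j hj hij).symm.imp (fun _ => by linarith)
      fun _ => by linarith)
    hspace fun i hi => (htrav i hi).comp_neg
  rwa [neg_sub_neg] at h

end Reclaiming

lemma exists_finished_initial_segment {n : ℕ} {p t l : Fin n → ℝ} {H : ℝ → ℝ} {C t₁ : ℝ}
    (hp : ∀ i, 0 ≤ p i) (htmem : ∀ i, 0 ≤ t i ∧ t i + p i ≤ C)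
    (horder : ∀ i j : Fin n, i < j → t i + p i ≤ t j)
    (htrav : ∀ i, Traverses H (t i) (l i) (l i + p i)) (hmax : IsMaxOn H (Icc 0 C) t₁) :
    ∃ k ≤ n, ∀ i : Fin n, ((i : ℕ) < k → t i + p i ≤ t₁) ∧ (¬ (i : ℕ) < k → t₁ ≤ t i) := by
  obtain ⟨k, hkn, hk⟩ := Fin.exists_iff_lt_of_antitone (P := fun i => t i + p i ≤ t₁)
    fun i j hij hj => by
      rcases hij.eq_or_lt with rfl | h
      exacts [hj, by linarith [horder i j h, hp j]]
  refine ⟨k, hkn, fun i => ⟨(hk i).2, fun hi => not_lt.1 fun h => ?_⟩⟩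
  exact (htrav i).notMem_Ioo_of_isMaxOn (Icc_subset_Icc (htmem i).1 (htmem i).2) hmax
    ⟨h, not_le.1 (mt (hk i).1 hi)⟩

lemma abs_sub_le_of_sweep_bounds {s x τ₁ τ₂ Q₁ Q₂ A₁ A₂ : ℝ} (hA₁ : 0 ≤ A₁) (hA₂ : 0 ≤ A₂)
    (h₁ : Q₁ ≤ x + A₁) (h₂ : Q₂ ≤ x + A₂)
    (h₁' : x - Q₁ + 2 * A₁ ≤ s * (τ₁ - Q₁)) (h₂' : x - Q₂ + 2 * A₂ ≤ s * (τ₂ - Q₂)) :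
    |Q₁ - Q₂| ≤ s * (τ₁ + τ₂ - (Q₁ + Q₂)) := by
  have hsum : s * (τ₁ - Q₁) + s * (τ₂ - Q₂) = s * (τ₁ + τ₂ - (Q₁ + Q₂)) := by ring
  rw [abs_sub_le_iff]
  constructor <;> linarith

theorem stmt8_general (n : ℕ) (p : Fin n → ℝ) (hp : ∀ i, 0 < p i)
    (L s : ℝ) (hs : 1 ≤ s)
    -- placement: pad choice and left endpoint for each stockpile
    (pads : Fin n → Bool) (l : Fin n → ℝ)
    (hplace : ∀ i, 0 ≤ l i ∧ l i + p i ≤ L)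
    (hdisj : ∀ i j, i ≠ j → pads i = pads j → l i + p i ≤ l j ∨ l j + p j ≤ l i)
    -- schedule: reclaimer trajectory with makespan C, traversing the stockpiles in order
    (C : ℝ) (hC : 0 ≤ C) (H : ℝ → ℝ)
    (hH0 : H 0 = 0) (hHC : H C = 0)
    (hspeed : ∀ t u : ℝ, |H t - H u| ≤ s * |t - u|)
    (t : Fin n → ℝ)
    (htmem : ∀ i, 0 ≤ t i ∧ t i + p i ≤ C)
    (horder : ∀ i j : Fin n, i < j → t i + p i ≤ t j)
    (htrav : ∀ i, Traverses H (t i) (l i) (l i + p i)) :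
    (∑ i, p i) +
      ((Finset.range (n + 1)).inf' Finset.nonempty_range_add_one fun k =>
        |(∑ i ∈ Finset.univ.filter (fun i : Fin n => (i : ℕ) < k), p i) -
          ((∑ i, p i) - ∑ i ∈ Finset.univ.filter (fun i : Fin n => (i : ℕ) < k), p i)|) / s
      ≤ C := by
  have hs₀ : 0 < s := by linarith
  have hLip : LipschitzWith s.toNNReal H := LipschitzWith.of_dist_le' hspeed
  obtain ⟨t₁, ht₁, hmax⟩ :=
    isCompact_Icc.exists_isMaxOn (nonempty_Icc.2 hC) hLip.continuous.continuousOn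
  have hx₁ : 0 ≤ H t₁ := hH0 ▸ hmax (left_mem_Icc.2 hC)
  have htop i : l i + p i ≤ H t₁ :=
    (htrav i).add_le_of_isMaxOn (hp i).le (Icc_subset_Icc (htmem i).1 (htmem i).2) hmax
  have htime i j (hij : i ≠ j) : t i + p i ≤ t j ∨ t j + p j ≤ t i :=
    (lt_or_gt_of_ne hij).imp (horder i j) (horder j i)
  obtain ⟨k, hkn, hk⟩ :=
    exists_finished_initial_segment (fun i => (hp i).le) htmem horder htrav hmax
  obtain ⟨A₁, hA₁, h₁, h₁'⟩ := exists_overlap_bounds (pad := pads)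
    (S := univ.filter fun i : Fin n => (i : ℕ) < k) hLip ht₁.1 hx₁ hH0 rfl
    (fun i _ => (hp i).le) (fun i _ => ⟨(hplace i).1, htop i⟩)
    (fun i hi => ⟨(htmem i).1, (hk i).1 (mem_filter.1 hi).2⟩)
    (fun i _ j _ => htime i j) (fun i _ j _ => hdisj i j) (fun i _ => htrav i)
  obtain ⟨A₂, hA₂, h₂, h₂'⟩ := exists_overlap_bounds_rev (pad := pads)
    (S := univ.filter fun i : Fin n => ¬ (i : ℕ) < k) hLip ht₁.2 hx₁ rfl hHC
    (fun i _ => (hp i).le) (fun i _ => ⟨(hplace i).1, htop i⟩)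
    (fun i hi => ⟨(hk i).2 (mem_filter.1 hi).2, (htmem i).2⟩)
    (fun i _ j _ => htime i j) (fun i _ j _ => hdisj i j) (fun i _ => htrav i)
  rw [Real.coe_toNNReal s hs₀.le] at h₁' h₂'
  have hgap := abs_sub_le_of_sweep_bounds hA₁ hA₂ h₁ h₂ h₁' h₂'
  have hQ₂ : ∑ i ∈ univ.filter (fun i : Fin n => ¬ (i : ℕ) < k), p i =
      ∑ i, p i - ∑ i ∈ univ.filter (fun i : Fin n => (i : ℕ) < k), p i := by
    rw [← sum_filter_add_sum_filter_not univ (fun i : Fin n => (i : ℕ) < k) p]; ring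
  rw [hQ₂, add_sub_cancel, show t₁ - 0 + (C - t₁) = C by ring] at hgap
  rw [← le_sub_iff_add_le', div_le_iff₀ hs₀, mul_comm]
  exact (inf'_le _ (mem_range.2 (Nat.lt_succ_of_le hkn))).trans hgap

/-- Lower bound for a single reclaimer with positioning decisions and a fixed
reclaim order: for any placement of the stockpiles on the two pads and any feasible
schedule, the makespan `C` is at least `P + min_{0 ≤ k ≤ n} |P^k − P̄^k| / s`. -/
theorem stmt8 (n : ℕ) (p : Fin n → ℝ) (hp : ∀ i, 0 < p i)
    (L s : ℝ) (hs : 1 ≤ s) (hL : 0 < L)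
    (hsum : ∑ i, p i ≤ 3 * L / 2)
    -- placement: pad choice and left endpoint for each stockpile
    (pads : Fin n → Bool) (l : Fin n → ℝ)
    (hplace : ∀ i, 0 ≤ l i ∧ l i + p i ≤ L)
    (hdisj : ∀ i j, i ≠ j → pads i = pads j → l i + p i ≤ l j ∨ l j + p j ≤ l i)
    -- schedule: reclaimer trajectory with makespan C, traversing the stockpiles in order
    (C : ℝ) (hC : 0 ≤ C) (H : ℝ → ℝ)
    (hH0 : H 0 = 0) (hHC : H C = 0)
    (hspeed : ∀ t u : ℝ, |H t - H u| ≤ s * |t - u|)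
    (t : Fin n → ℝ)
    (htmem : ∀ i, 0 ≤ t i ∧ t i + p i ≤ C)
    (horder : ∀ i j : Fin n, i < j → t i + p i ≤ t j)
    (htrav : ∀ i, Traverses H (t i) (l i) (l i + p i)) :
    (∑ i, p i) +
      ((Finset.range (n + 1)).inf' Finset.nonempty_range_add_one fun k =>
        |(∑ i ∈ Finset.univ.filter (fun i : Fin n => (i : ℕ) < k), p i) -
          ((∑ i, p i) - ∑ i ∈ Finset.univ.filter (fun i : Fin n => (i : ℕ) < k), p i)|) / s
      ≤ C :=
  stmt8_general n p hp L s hs pads l hplace hdisj C hC H hH0 hHC hspeed t htmem horder htrav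
end

section
/- In the Partition-reduction instance for two reclaimers (pad length 6B, travel speed s = 5B, stockpiles of lengths a_1,…,a_m on [2B,4B] plus two stockpiles [0,2B] and [4B,6B]), if there is no index set I with Σ_{i∈I} a_i = B, then in any partition of the stockpiles between the two reclaimers, one reclaimer has total reclaim time at least 3B + 1. -/
/-! The stockpile lengths total `6B`, so the busier reclaimer needs at least `3B + 1` unless
some group has length exactly `3B`. A group contains zero, one or both long stockpiles of
length `2B` together with some of the `a i`, whose total lies in `[0, 2B]`; it can reach `3B`
only with exactly one long stockpile and small stockpiles summing to `B`. -/

open Finset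

lemma succ_le_max_of_add_eq_two_mul {x y n : ℕ} (hxy : x + y = 2 * n) (hx : x ≠ n) :
    n + 1 ≤ max x y := by
  omega

lemma sum_elim_const_eq {α β : Type*} (S : Finset (α ⊕ β)) (a : α → ℕ) (c : ℕ) :
    ∑ i ∈ S, Sum.elim a (fun _ => c) i = ∑ i ∈ S.toLeft, a i + #S.toRight * c := by
  simp [sum_sum_eq_sum_toLeft_add_sum_toRight]

lemma sum_elim_add_sum_compl {m : ℕ} (a : Fin m → ℕ) (B : ℕ) (hsum : ∑ i, a i = 2 * B)
    (S : Finset (Fin m ⊕ Fin 2)) :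
    ∑ i ∈ S, Sum.elim a (fun _ => 2 * B) i + ∑ i ∈ Sᶜ, Sum.elim a (fun _ => 2 * B) i
      = 6 * B := by
  rw [sum_add_sum_compl, Fintype.sum_sum_type]
  simp only [Sum.elim_inl, Sum.elim_inr, hsum, sum_const, card_univ, Fintype.card_fin,
    smul_eq_mul]
  ring

lemma sum_elim_ne_three_mul {m : ℕ} (a : Fin m → ℕ) (B : ℕ) (hsum : ∑ i, a i = 2 * B)
    (hno : ¬ ∃ I : Finset (Fin m), ∑ i ∈ I, a i = B) (S : Finset (Fin m ⊕ Fin 2)) :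
    ∑ i ∈ S, Sum.elim a (fun _ => 2 * B) i ≠ 3 * B := by
  have hle : ∑ i ∈ S.toLeft, a i ≤ 2 * B := hsum ▸ sum_le_sum_of_subset (subset_univ _)
  have hne : ∑ i ∈ S.toLeft, a i ≠ B := fun h => hno ⟨_, h⟩
  have hcard : #S.toRight ≤ 2 := by simpa using card_le_univ S.toRight
  rw [sum_elim_const_eq]
  interval_cases #S.toRight <;> omega

theorem stmt12_general (m B : ℕ) (a : Fin m → ℕ)
    (hsum : ∑ i, a i = 2 * B)
    (hno : ¬ ∃ I : Finset (Fin m), ∑ i ∈ I, a i = B) :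
    ∀ S : Finset (Fin m ⊕ Fin 2),
      3 * B + 1 ≤ max (∑ i ∈ S, Sum.elim a (fun _ => 2 * B) i)
                      (∑ i ∈ Sᶜ, Sum.elim a (fun _ => 2 * B) i) := by
  intro S
  refine succ_le_max_of_add_eq_two_mul ?_ (sum_elim_ne_three_mul a B hsum hno S)
  rw [sum_elim_add_sum_compl a B hsum S]
  ring

/-- In the Partition-reduction instance (small stockpiles of lengths `a i` summing to
`2B` plus two stockpiles of length `2B`), if there is no index set `I` with
`∑_{i ∈ I} a i = B`, then in any partition of the stockpiles between the two
reclaimers one reclaimer has total reclaim time at least `3B + 1`. -/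
theorem stmt12 (m B : ℕ) (a : Fin m → ℕ) (ha : ∀ i, 0 < a i)
    (hsum : ∑ i, a i = 2 * B)
    (hno : ¬ ∃ I : Finset (Fin m), ∑ i ∈ I, a i = B) :
    ∀ S : Finset (Fin m ⊕ Fin 2),
      3 * B + 1 ≤ max (∑ i ∈ S, Sum.elim a (fun _ => 2 * B) i)
                      (∑ i ∈ Sᶜ, Sum.elim a (fun _ => 2 * B) i) :=
  stmt12_general m B a hsum hno
end
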